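/- arXiv:1110.3692 — 3 statements merged into one kernel-verified Lean document; each statement's English description precedes it below -/
import Mathlib

section
/- The convolution algebra of compactly supported finite complex Borel measures on ℝ has no zero divisors: if μ, ν are compactly supported finite complex measures on ℝ with μ * ν = 0, then μ = 0 or ν = 0. -/
/-!
The two-sided Laplace transform `L μ z = ∫ e^{z x} dμ(x)` of a compactly supported complex
measure is an entire function, and it turns convolution into multiplication, so `μ * ν = 0`
gives `L μ · L ν = 0`. The ring of entire functions has no zero divisors (identity theorem), so
one of the transforms vanishes identically; on the imaginary axis it is the Fourier transform,
which determines the measure.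
-/

open MeasureTheory

/-- Integral of a complex-valued function against a complex measure, via the Jordan
decompositions of the real and imaginary parts. -/
noncomputable def cintegral {α : Type*} [MeasurableSpace α] (μ : ComplexMeasure α)
    (f : α → ℂ) : ℂ :=
  ((∫ x, f x ∂(ComplexMeasure.re μ).toJordanDecomposition.posPart) -
      ∫ x, f x ∂(ComplexMeasure.re μ).toJordanDecomposition.negPart) +
    Complex.I * ((∫ x, f x ∂(ComplexMeasure.im μ).toJordanDecomposition.posPart) -
      ∫ x, f x ∂(ComplexMeasure.im μ).toJordanDecomposition.negPart)

/-- A complex measure is compactly supported if it vanishes on measurable sets disjoint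
from some compact set. -/
def MeasCompactSupport {G : Type*} [TopologicalSpace G] [MeasurableSpace G]
    (μ : ComplexMeasure G) : Prop :=
  ∃ K : Set G, IsCompact K ∧ ∀ A : Set G, MeasurableSet A → A ∩ K = ∅ → μ A = 0

/-- `ρ` is the convolution of `μ` and `ν` (w.r.t. the group operation `op`):
`∫ f dρ = ∬ f (op x y) dμ(x) dν(y)` for every continuous `f`. -/
def IsConvolution {G : Type*} [TopologicalSpace G] [MeasurableSpace G] (op : G → G → G)
    (μ ν ρ : ComplexMeasure G) : Prop :=
  ∀ f : G → ℂ, Continuous f →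
    cintegral ρ f = cintegral μ (fun x => cintegral ν (fun y => f (op x y)))

open Complex ComplexConjugate

theorem cintegral_zero {α : Type*} [MeasurableSpace α] (f : α → ℂ) :
    cintegral (0 : ComplexMeasure α) f = 0 := by
  simp [cintegral, map_zero, SignedMeasure.toJordanDecomposition_zero]

theorem cintegral_const_mul {α : Type*} [MeasurableSpace α] (μ : ComplexMeasure α) (c : ℂ)
    (f : α → ℂ) : cintegral μ (fun x => c * f x) = c * cintegral μ f := by
  simp only [cintegral, integral_const_mul]
  ring

namespace MeasureTheory.SignedMeasure

variable {α : Type*} [MeasurableSpace α]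

theorem totalVariation_eq_zero_of_forall_subset (s : SignedMeasure α) {A : Set α}
    (hA : MeasurableSet A) (h : ∀ B ⊆ A, MeasurableSet B → s B = 0) :
    s.totalVariation A = 0 := by
  obtain ⟨i, hi, hpos, hneg, hp, hn⟩ := s.toJordanDecomposition_spec
  rw [totalVariation, Measure.add_apply, hp, hn, toMeasureOfZeroLE_apply _ hpos hi hA,
    toMeasureOfLEZero_apply _ hneg hi.compl hA]
  simp [h _ Set.inter_subset_right (hi.inter hA), h _ Set.inter_subset_right (hi.compl.inter hA)]

theorem eq_zero_of_posPart_eq_negPart {s : SignedMeasure α}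
    (h : s.toJordanDecomposition.posPart = s.toJordanDecomposition.negPart) : s = 0 := by
  rw [← s.toSignedMeasure_toJordanDecomposition, JordanDecomposition.toSignedMeasure]
  simp only [h, sub_self]

end MeasureTheory.SignedMeasure

theorem MeasCompactSupport.exists_ae_abs_le {μ : ComplexMeasure ℝ} (hμ : MeasCompactSupport μ) :
    ∃ R, (∀ᵐ x ∂(ComplexMeasure.re μ).totalVariation, |x| ≤ R) ∧
      ∀ᵐ x ∂(ComplexMeasure.im μ).totalVariation, |x| ≤ R := by
  obtain ⟨K, hK, hμK⟩ := hμ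
  obtain ⟨R, hKR⟩ := hK.isBounded.subset_closedBall 0
  have hmeas : MeasurableSet {x : ℝ | R < |x|} := measurableSet_lt measurable_const measurable_abs
  have hout : ∀ B ⊆ {x : ℝ | R < |x|}, MeasurableSet B → μ B = 0 := fun B hB hBm =>
    hμK B hBm <| Set.eq_empty_of_forall_notMem fun x ⟨hxB, hxK⟩ =>
      (hB hxB).not_ge (by simpa using hKR hxK)
  refine ⟨R, ?_, ?_⟩ <;> refine ae_iff.mpr ?_ <;> simp only [not_le]
  · exact (ComplexMeasure.re μ).totalVariation_eq_zero_of_forall_subset hmeas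
      fun B hB hBm => congrArg re (hout B hB hBm)
  · exact (ComplexMeasure.im μ).totalVariation_eq_zero_of_forall_subset hmeas
      fun B hB hBm => congrArg im (hout B hB hBm)

theorem norm_cexp_mul_ofReal_le (w : ℂ) (x : ℝ) : ‖cexp (w * x)‖ ≤ Real.exp (‖w‖ * |x|) := by
  simpa [Real.norm_eq_abs] using norm_exp_le_exp_norm (w * x)

theorem hasDerivAt_integral_cexp_mul {ρ : Measure ℝ} [IsFiniteMeasure ρ] {R : ℝ}
    (hρ : ∀ᵐ x ∂ρ, |x| ≤ R) (z : ℂ) :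
    HasDerivAt (fun w : ℂ => ∫ x : ℝ, cexp (w * x) ∂ρ) (∫ x : ℝ, x * cexp (z * x) ∂ρ) z := by
  have hbound : ∀ᵐ x : ℝ ∂ρ, ∀ w ∈ Metric.ball z 1,
      ‖cexp (w * x)‖ ≤ Real.exp ((‖z‖ + 1) * R) ∧
        ‖(x : ℂ) * cexp (w * x)‖ ≤ R * Real.exp ((‖z‖ + 1) * R) := by
    filter_upwards [hρ] with x hx w hw
    have hw' : ‖w‖ ≤ ‖z‖ + 1 := by
      linarith [norm_le_norm_add_norm_sub' w z, mem_ball_iff_norm.mp hw]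
    have hexp : ‖cexp (w * x)‖ ≤ Real.exp ((‖z‖ + 1) * R) :=
      (norm_cexp_mul_ofReal_le w x).trans
        (Real.exp_le_exp.mpr (mul_le_mul hw' hx (abs_nonneg x) (by positivity)))
    refine ⟨hexp, ?_⟩
    rw [norm_mul, norm_real, Real.norm_eq_abs]
    exact mul_le_mul hx hexp (norm_nonneg _) ((abs_nonneg x).trans hx)
  refine (hasDerivAt_integral_of_dominated_loc_of_deriv_le (Metric.ball_mem_nhds z one_pos)
    (F' := fun w (x : ℝ) => (x : ℂ) * cexp (w * x))
    (.of_forall fun w => (by fun_prop : Continuous fun x : ℝ => cexp (w * x)).aestronglyMeasurable)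
    ?_ (by fun_prop : Continuous fun x : ℝ => (x : ℂ) * cexp (z * x)).aestronglyMeasurable
    (hbound.mono fun x hx w hw => (hx w hw).2) (integrable_const _) ?_).2
  · exact .of_bound (by fun_prop) _
      (hbound.mono fun x hx => (hx z (Metric.mem_ball_self one_pos)).1)
  · refine .of_forall fun x w _ => ?_
    simpa [mul_comm] using ((hasDerivAt_id w).mul_const (x : ℂ)).cexp

noncomputable def MeasureTheory.SignedMeasure.charFun (s : SignedMeasure ℝ) (t : ℝ) : ℂ :=
  MeasureTheory.charFun s.toJordanDecomposition.posPart t -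
    MeasureTheory.charFun s.toJordanDecomposition.negPart t

namespace MeasureTheory.SignedMeasure

theorem charFun_neg (s : SignedMeasure ℝ) (t : ℝ) : s.charFun (-t) = conj (s.charFun t) := by
  simp [SignedMeasure.charFun]

theorem eq_zero_of_charFun_eq_zero {s : SignedMeasure ℝ} (h : ∀ t, s.charFun t = 0) : s = 0 :=
  eq_zero_of_posPart_eq_negPart <| Measure.ext_of_charFun <| funext fun t => sub_eq_zero.mp (h t)

end MeasureTheory.SignedMeasure

theorem Complex.eq_zero_of_add_I_mul_eq_zero {a b : ℂ} (h : a + I * b = 0)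
    (h' : conj a + I * conj b = 0) : a = 0 ∧ b = 0 := by
  have h'' : a - I * b = 0 := by simpa [sub_eq_add_neg] using congrArg conj h'
  have ha : a = 0 := by linear_combination (h + h'') / 2
  exact ⟨ha, by simpa [ha] using h⟩

namespace MeasureTheory.ComplexMeasure

noncomputable def laplace (μ : ComplexMeasure ℝ) (z : ℂ) : ℂ :=
  cintegral μ fun x : ℝ => cexp (z * x)

theorem differentiable_laplace {μ : ComplexMeasure ℝ} (hμ : MeasCompactSupport μ) :
    Differentiable ℂ μ.laplace := by
  obtain ⟨R, hre, him⟩ := hμ.exists_ae_abs_le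
  have hd : ∀ (ρ : Measure ℝ) [IsFiniteMeasure ρ], (∀ᵐ x ∂ρ, |x| ≤ R) →
      Differentiable ℂ fun z : ℂ => ∫ x : ℝ, cexp (z * x) ∂ρ :=
    fun ρ _ hρ z => (hasDerivAt_integral_cexp_mul hρ z).differentiableAt
  rw [SignedMeasure.totalVariation, ae_add_measure_iff] at hre him
  exact ((hd _ hre.1).sub (hd _ hre.2)).add (((hd _ him.1).sub (hd _ him.2)).const_mul I)

theorem laplace_mul_laplace_eq_zero {μ ν : ComplexMeasure ℝ}
    (h : IsConvolution (· + ·) μ ν 0) (z : ℂ) : μ.laplace z * ν.laplace z = 0 :=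
  calc μ.laplace z * ν.laplace z
      = cintegral μ fun x => cintegral ν fun y => cexp (z * ↑(x + y)) := by
        simp only [laplace, ofReal_add, mul_add, exp_add, cintegral_const_mul]
        rw [mul_comm, ← cintegral_const_mul]
        simp only [mul_comm]
    _ = 0 := (h (fun w : ℝ => cexp (z * w)) (by fun_prop)).symm.trans (cintegral_zero _)

theorem laplace_ofReal_mul_I (μ : ComplexMeasure ℝ) (t : ℝ) :
    μ.laplace (t * I) = (re μ).charFun t + I * (im μ).charFun t := by
  simp only [laplace, cintegral, SignedMeasure.charFun, charFun_apply_real, mul_right_comm]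

theorem eq_zero_of_laplace_ofReal_mul_I_eq_zero {μ : ComplexMeasure ℝ}
    (h : ∀ t : ℝ, μ.laplace (t * I) = 0) : μ = 0 := by
  -- The transforms of the Jordan parts are not real, so the real and imaginary parts of `μ` are
  -- separated using `L μ (-t I)`, whose terms are the conjugates of those of `L μ (t I)`.
  have hchar : ∀ t, (re μ).charFun t = 0 ∧ (im μ).charFun t = 0 := fun t =>
    eq_zero_of_add_I_mul_eq_zero (by rw [← laplace_ofReal_mul_I, h])
      (by rw [← SignedMeasure.charFun_neg, ← SignedMeasure.charFun_neg, ← laplace_ofReal_mul_I, h])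
  have hre := SignedMeasure.eq_zero_of_charFun_eq_zero fun t => (hchar t).1
  have him := SignedMeasure.eq_zero_of_charFun_eq_zero fun t => (hchar t).2
  exact (equivSignedMeasureₗ (R := ℝ)).map_eq_zero_iff.mp (Prod.ext hre him)

end MeasureTheory.ComplexMeasure

/-- The convolution algebra of compactly supported finite complex Borel measures on `ℝ`
has no zero divisors. -/
theorem no_zero_divisors_Mc_real (μ ν : ComplexMeasure ℝ)
    (hμ : MeasCompactSupport μ) (hν : MeasCompactSupport ν)
    (h : IsConvolution (· + ·) μ ν (0 : ComplexMeasure ℝ)) :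
    μ = 0 ∨ ν = 0 := by
  have hμL := analyticOnNhd_univ_iff_differentiable.mpr (ComplexMeasure.differentiable_laplace hμ)
  have hνL := analyticOnNhd_univ_iff_differentiable.mpr (ComplexMeasure.differentiable_laplace hν)
  rcases hμL.eq_zero_or_eq_zero_of_mul_eq_zero hνL
    (fun z _ => ComplexMeasure.laplace_mul_laplace_eq_zero h z) isPreconnected_univ with h0 | h0
  · exact .inl (ComplexMeasure.eq_zero_of_laplace_ofReal_mul_I_eq_zero fun t => h0 _ trivial)
  · exact .inr (ComplexMeasure.eq_zero_of_laplace_ofReal_mul_I_eq_zero fun t => h0 _ trivial)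
end

section
/- Let 1 → A → G → Q → 1 be an extension of Lie groups with A ≅ ℝ a closed central-series-type normal subgroup identified with ℝ, and q : G → Q the quotient map. Define γ₊(f)(x) = ∫_A f(xa⁻¹) 𝟙_{[0,∞)}(a) da and γ₋(f)(x) = ∫_A f(xa⁻¹) 𝟙_{(−∞,0]}(a) da for f ∈ C_c(G). If f ∈ C_c(G) satisfies q₊f = 0 (i.e., ∫_A f(xa) da = 0 for all x ∈ G), then γ₊(f) and γ₋(f) are compactly supported continuous functions on G. -/
/-!
Continuity is local: for `x` near any `x₀`, all the integrands `t ↦ f(x ι(t)⁻¹)` are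
supported in one compact set of `t`, because `ι(ℝ)` is closed.

Compact support comes from `q₊f = 0`: it says `γ₋ f = -γ₊ f`, so if `γ₊ f(x) ≠ 0` the
support of `f` meets the line `x ι(ℝ)` both at some `x ι(t)⁻¹` with `t ≥ 0` and at some
`x ι(s)⁻¹` with `s ≤ 0`. Then `ι(t - s) ∈ (supp f)⁻¹ supp f`, which bounds `t - s` and
hence `t`; thus `x ∈ supp f · ι([0, R])`.
-/

open MeasureTheory Set Filter Topology Pointwise

section ClosedEmbedding

variable {X G : Type*} [PseudoMetricSpace X] [TopologicalSpace G] [Group G]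
  [IsTopologicalGroup G] {j : X → G}

/-- `C` is separated from the closed set `j(X \ thickening 1 (j⁻¹ C))`. -/
theorem Topology.IsClosedEmbedding.exists_nhds_one_isBounded_preimage_mul
    (hj : IsClosedEmbedding j) {C : Set G} (hC : IsCompact C) :
    ∃ V ∈ 𝓝 (1 : G), Bornology.IsBounded (j ⁻¹' (V * C)) := by
  set T := Metric.thickening 1 (j ⁻¹' C)
  have hF : IsClosed (j '' Tᶜ) := hj.isClosedMap _ Metric.isOpen_thickening.isClosed_compl
  have hCF : C ⊆ (j '' Tᶜ)ᶜ := by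
    rintro _ hx ⟨t, ht, rfl⟩
    exact ht (Metric.self_subset_thickening one_pos _ hx)
  obtain ⟨V, hV, hVC⟩ := compact_open_separated_mul_left hC hF.isOpen_compl hCF
  refine ⟨V, hV, ((hj.isProperMap.isCompact_preimage hC).isBounded.thickening (δ := 1)).subset
    fun t ht => ?_⟩
  by_contra h
  exact hVC ht ⟨t, h, rfl⟩

theorem continuous_integral_mul_of_isClosedEmbedding [ProperSpace X] [MeasurableSpace X]
    [OpensMeasurableSpace X] (μ : Measure X) [IsFiniteMeasureOnCompacts μ]
    (hj : IsClosedEmbedding j) {E : Type*} [NormedAddCommGroup E] [NormedSpace ℝ E]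
    {f : G → E} (hf : Continuous f) (hfc : HasCompactSupport f) :
    Continuous fun x => ∫ t, f (x * j t) ∂μ := by
  refine continuous_iff_continuousAt.2 fun x₀ => ?_
  obtain ⟨V, hV, hbdd⟩ := hj.exists_nhds_one_isBounded_preimage_mul (hfc.isCompact.smul x₀⁻¹)
  have hnhds : {x | x⁻¹ * x₀ ∈ V} ∈ 𝓝 x₀ :=
    (continuous_inv.mul continuous_const).tendsto' x₀ 1 (inv_mul_cancel x₀) hV
  refine (continuousOn_integral_of_compact_support (f := fun x t => f (x * j t))
    hbdd.isCompact_closure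
    (hf.comp (continuous_fst.mul (hj.continuous.comp continuous_snd))).continuousOn
    fun x t hx ht => ?_).continuousAt hnhds
  by_contra hne
  refine ht (subset_closure ?_)
  have hjt : j t = (x⁻¹ * x₀) * x₀⁻¹ • (x * j t) := by simp only [smul_eq_mul]; group
  rw [mem_preimage, hjt]
  exact mul_mem_mul hx (smul_mem_smul_set (subset_tsupport f hne))

end ClosedEmbedding

theorem exists_mem_ne_zero_of_setIntegral_ne_zero {X E : Type*} [MeasurableSpace X]
    [NormedAddCommGroup E] [NormedSpace ℝ E] {μ : Measure X} {s : Set X} {g : X → E}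
    (h : ∫ x in s, g x ∂μ ≠ 0) : ∃ x ∈ s, g x ≠ 0 := by
  by_contra! hg
  exact h (setIntegral_eq_zero_of_forall_eq_zero hg)

section AddChar

variable {G E : Type*} [TopologicalSpace G] [Group G] [IsTopologicalGroup G] {ψ : AddChar ℝ G}
  [Zero E] {f : G → E}

theorem exists_abs_sub_le_of_ne_zero (hψ : IsClosedEmbedding ψ) (hfc : HasCompactSupport f) :
    ∃ R, ∀ x t s, f (x * (ψ t)⁻¹) ≠ 0 → f (x * (ψ s)⁻¹) ≠ 0 → |t - s| ≤ R := by
  obtain ⟨R, hR⟩ := (hψ.isProperMap.isCompact_preimage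
    (hfc.isCompact.inv.mul hfc.isCompact)).isBounded.subset_closedBall 0
  refine ⟨R, fun x t s ht hs => ?_⟩
  have hts : ψ (t - s) = (x * (ψ t)⁻¹)⁻¹ * (x * (ψ s)⁻¹) := by
    rw [sub_eq_add_neg, AddChar.map_add_eq_mul, AddChar.map_neg_eq_inv]
    group
  have hmem : ψ (t - s) ∈ (tsupport f)⁻¹ * tsupport f := by
    rw [hts]
    exact mul_mem_mul (inv_mem_inv.2 (subset_tsupport f ht)) (subset_tsupport f hs)
  simpa [Real.dist_0_eq_abs] using hR hmem

theorem exists_isCompact_of_ne_zero_of_ne_zero (hψ : IsClosedEmbedding ψ)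
    (hfc : HasCompactSupport f) :
    ∃ K, IsCompact K ∧ ∀ x t s, s ≤ 0 → 0 ≤ t →
      f (x * (ψ t)⁻¹) ≠ 0 → f (x * (ψ s)⁻¹) ≠ 0 → x ∈ K := by
  obtain ⟨R, hR⟩ := exists_abs_sub_le_of_ne_zero hψ hfc
  refine ⟨tsupport f * ψ '' Icc 0 R, hfc.isCompact.mul (isCompact_Icc.image hψ.continuous),
    fun x t s hs ht hft hfs => ?_⟩
  have htR : t ≤ R := by linarith [le_abs_self (t - s), hR x t s hft hfs]
  have htI : t ∈ Icc 0 R := ⟨ht, htR⟩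
  simpa using mul_mem_mul (subset_tsupport f hft) (mem_image_of_mem ψ htI)

end AddChar

theorem gamma_pm_compactly_supported_general {G : Type*} [TopologicalSpace G] [Group G]
    [IsTopologicalGroup G]
    (ι : ℝ → G) (hιhom : ∀ s t : ℝ, ι (s + t) = ι s * ι t)
    (hιemb : Topology.IsClosedEmbedding ι)
    (f : G → ℂ) (hf : Continuous f) (hfc : HasCompactSupport f)
    (hq : ∀ x : G, (∫ t : ℝ, f (x * ι t)) = 0) :
    Continuous (fun x : G => ∫ t in Set.Ici (0 : ℝ), f (x * (ι t)⁻¹)) ∧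
    HasCompactSupport (fun x : G => ∫ t in Set.Ici (0 : ℝ), f (x * (ι t)⁻¹)) ∧
    Continuous (fun x : G => ∫ t in Set.Iic (0 : ℝ), f (x * (ι t)⁻¹)) ∧
    HasCompactSupport (fun x : G => ∫ t in Set.Iic (0 : ℝ), f (x * (ι t)⁻¹)) := by
  obtain ⟨ψ, rfl⟩ : ∃ ψ : AddChar ℝ G, ⇑ψ = ι :=
    ⟨⟨ι, (mul_eq_left (a := ι 0)).1 (by rw [← hιhom, add_zero]), hιhom⟩, rfl⟩
  have hinv : IsClosedEmbedding fun t => (ψ t)⁻¹ :=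
    (Homeomorph.inv G).isClosedEmbedding.comp hιemb
  have hcont (I : Set ℝ) : Continuous fun x => ∫ t in I, f (x * (ψ t)⁻¹) :=
    continuous_integral_mul_of_isClosedEmbedding _ hinv hf hfc
  have hneg (x : G) :
      (∫ t in Iic 0, f (x * (ψ t)⁻¹)) = -∫ t in Ici 0, f (x * (ψ t)⁻¹) := by
    have hint : Integrable fun t => f (x * (ψ t)⁻¹) :=
      (hf.comp (continuous_const.mul hinv.continuous)).integrable_of_hasCompactSupport
        (hfc.comp_isClosedEmbedding ((Homeomorph.mulLeft x).isClosedEmbedding.comp hinv))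
    rw [eq_neg_iff_add_eq_zero, integral_Ici_eq_integral_Ioi,
      intervalIntegral.integral_Iic_add_Ioi hint.integrableOn hint.integrableOn, ← hq x,
      ← integral_neg_eq_self]
    simp only [AddChar.map_neg_eq_inv, inv_inv]
  obtain ⟨K, hK, hmem⟩ := exists_isCompact_of_ne_zero_of_ne_zero hιemb hfc
  have hsupp (x : G) (hx : (∫ t in Ici 0, f (x * (ψ t)⁻¹)) ≠ 0) : x ∈ K := by
    have hx' : (∫ t in Iic 0, f (x * (ψ t)⁻¹)) ≠ 0 := by rwa [hneg, neg_ne_zero]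
    obtain ⟨t, ht, hft⟩ := exists_mem_ne_zero_of_setIntegral_ne_zero hx
    obtain ⟨s, hs, hfs⟩ := exists_mem_ne_zero_of_setIntegral_ne_zero hx'
    exact hmem x t s hs ht hft hfs
  refine ⟨hcont _, .intro hK fun x hx => ?_, hcont _, .intro hK fun x hx => ?_⟩
  · exact not_not.1 (hx ∘ hsupp x)
  · rw [hneg, neg_eq_zero]
    exact not_not.1 (hx ∘ hsupp x)

/-- For an extension `1 → A → G → Q → 1` of Lie groups with `A ≅ ℝ` (realized by a
closed embedding `ι : ℝ → G` onto a normal subgroup), if `f ∈ C_c(G)` satisfies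
`q₊f = 0`, i.e. `∫_A f(xa) da = 0` for all `x`, then
`γ₊(f)(x) = ∫_{[0,∞)} f(x ι(a)⁻¹) da` and `γ₋(f)(x) = ∫_{(-∞,0]} f(x ι(a)⁻¹) da`
are compactly supported continuous functions on `G`. -/
theorem gamma_pm_compactly_supported {E G : Type*} [NormedAddCommGroup E]
    [NormedSpace ℝ E] [TopologicalSpace G] [ChartedSpace E G] [Group G]
    [IsTopologicalGroup G] [LieGroup (modelWithCornersSelf ℝ E) (⊤ : ℕ∞) G]
    (ι : ℝ → G) (hιhom : ∀ s t : ℝ, ι (s + t) = ι s * ι t)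
    (hιemb : Topology.IsClosedEmbedding ι)
    (hιnorm : ∀ (g : G) (t : ℝ), ∃ s : ℝ, g * ι t * g⁻¹ = ι s)
    (f : G → ℂ) (hf : Continuous f) (hfc : HasCompactSupport f)
    (hq : ∀ x : G, (∫ t : ℝ, f (x * ι t)) = 0) :
    Continuous (fun x : G => ∫ t in Set.Ici (0 : ℝ), f (x * (ι t)⁻¹)) ∧
    HasCompactSupport (fun x : G => ∫ t in Set.Ici (0 : ℝ), f (x * (ι t)⁻¹)) ∧
    Continuous (fun x : G => ∫ t in Set.Iic (0 : ℝ), f (x * (ι t)⁻¹)) ∧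
    HasCompactSupport (fun x : G => ∫ t in Set.Iic (0 : ℝ), f (x * (ι t)⁻¹)) :=
  gamma_pm_compactly_supported_general ι hιhom hιemb f hf hfc hq
end

section
/- Let g ∈ C_c(ℝ) be a nonzero compactly supported continuous function with ∫ g = 0. Then the Fourier transform ĝ (an entire function) has a zero of finite positive order n at χ = 0, and the function G₁(b) = ∫_{−∞}^{b} g(t) dt is compactly supported with Fourier transform having a zero of order exactly n − 1 at 0. -/
/-!
The `k`-th derivative of `ĝ` at `0` is `(-i)ᵏ ∫ tᵏ g(t) dt`, so the order of the zero is the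
index of the first nonvanishing moment of `g`. Such a moment exists: if all moments vanish, the
Taylor series of the entire function `ĝ` at `0` vanishes, so `ĝ = 0` and `g = 0` by Fourier
inversion. Since `∫ g = 0` the order is positive and `G₁` is compactly supported, and integration
by parts gives `∫ tᵏ⁺¹ g = -(k + 1) ∫ tᵏ G₁`: the moments of `G₁` are those of `g` shifted by one.
-/

open MeasureTheory Set Complex Real FourierTransform

theorem norm_cexp_neg_I_mul_le (z : ℂ) (t : ℝ) :
    ‖cexp (-(I * z * t))‖ ≤ Real.exp (‖z‖ * |t|) := by
  rw [Complex.norm_exp, Real.exp_le_exp]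
  calc (-(I * z * t)).re = z.im * t := by simp
    _ ≤ |z.im| * |t| := by rw [← abs_mul]; exact le_abs_self _
    _ ≤ ‖z‖ * |t| := by gcongr; exact abs_im_le_norm z

noncomputable def complexFourier (h : ℝ → ℂ) (z : ℂ) : ℂ :=
  ∫ t : ℝ, h t * cexp (-(I * z * t))

section
variable {h : ℝ → ℂ}

theorem hasDerivAt_complexFourier (hc : Continuous h) (hcs : HasCompactSupport h) (z₀ : ℂ) :
    HasDerivAt (complexFourier h) (complexFourier (fun t ↦ -(I * t) * h t) z₀) z₀ := by
  have hderiv (z : ℂ) (t : ℝ) : HasDerivAt (fun z ↦ h t * cexp (-(I * z * t)))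
      (-(I * t) * h t * cexp (-(I * z * t))) z := by
    have hlin : HasDerivAt (fun z : ℂ ↦ -(I * z * t)) (-(I * t)) z := by
      simpa [mul_comm I, mul_assoc] using ((hasDerivAt_id' z).mul_const (I * t)).fun_neg
    exact (hlin.cexp.const_mul (h t)).congr_deriv (by ring)
  have hbound (z : ℂ) (t : ℝ) (hz : z ∈ Metric.ball z₀ 1) :
      ‖-(I * t) * h t * cexp (-(I * z * t))‖ ≤
        ‖(t : ℂ) * h t‖ * Real.exp ((‖z₀‖ + 1) * |t|) := by
    have hz' : ‖z‖ ≤ ‖z₀‖ + 1 := by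
      have := norm_le_norm_add_norm_sub' z z₀
      rw [mem_ball_iff_norm] at hz
      linarith
    simp only [norm_mul, norm_neg, norm_I, one_mul]
    gcongr
    exact (norm_cexp_neg_I_mul_le z t).trans (by gcongr)
  refine (hasDerivAt_integral_of_dominated_loc_of_deriv_le (Metric.ball_mem_nhds z₀ one_pos)
    (.of_forall fun z ↦ (hc.mul (by fun_prop)).aestronglyMeasurable)
    ((hc.mul (by fun_prop)).integrable_of_hasCompactSupport hcs.mul_right)
    (Continuous.aestronglyMeasurable (by fun_prop))
    (.of_forall fun t z hz ↦ hbound z t hz) ?_ (.of_forall fun t z _ ↦ hderiv z t)).2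
  exact (Continuous.integrable_of_hasCompactSupport (by fun_prop) (hcs.mul_left.norm.mul_right))

theorem differentiable_complexFourier (hc : Continuous h) (hcs : HasCompactSupport h) :
    Differentiable ℂ (complexFourier h) :=
  fun z ↦ (hasDerivAt_complexFourier hc hcs z).differentiableAt

theorem iteratedDeriv_complexFourier (hc : Continuous h) (hcs : HasCompactSupport h) (k : ℕ) :
    iteratedDeriv k (complexFourier h) = complexFourier (fun t ↦ (-(I * t)) ^ k * h t) := by
  induction k with
  | zero => simp
  | succ k ih =>
    ext z
    rw [iteratedDeriv_succ, ih,
      (hasDerivAt_complexFourier (h := fun t ↦ (-(I * t)) ^ k * h t) (by fun_prop)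
        hcs.mul_left z).deriv]
    simp only [pow_succ', mul_assoc]

theorem iteratedDeriv_complexFourier_zero (hc : Continuous h)
    (hcs : HasCompactSupport h) (k : ℕ) :
    iteratedDeriv k (complexFourier h) 0 = (-I) ^ k * ∫ t : ℝ, (t : ℂ) ^ k * h t := by
  rw [iteratedDeriv_complexFourier hc hcs, complexFourier, ← integral_const_mul]
  congr 1 with t
  simp only [mul_zero, zero_mul, neg_zero, Complex.exp_zero, mul_one, neg_mul_eq_neg_mul, mul_pow,
    mul_assoc]

theorem iteratedDeriv_complexFourier_zero_eq_zero_iff (hc : Continuous h)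
    (hcs : HasCompactSupport h) (k : ℕ) :
    iteratedDeriv k (complexFourier h) 0 = 0 ↔ ∫ t : ℝ, (t : ℂ) ^ k * h t = 0 := by
  simp [iteratedDeriv_complexFourier_zero hc hcs, I_ne_zero]

theorem complexFourier_two_pi_mul (w : ℝ) :
    complexFourier h (2 * π * w) = 𝓕 h w := by
  rw [complexFourier, Real.fourier_real_eq_integral_exp_smul]
  congr 1 with t
  rw [smul_eq_mul, mul_comm]
  congr 2
  push_cast
  ring

theorem eq_zero_of_forall_moment_eq_zero (hc : Continuous h) (hcs : HasCompactSupport h)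
    (hm : ∀ k : ℕ, ∫ t : ℝ, (t : ℂ) ^ k * h t = 0) : h = 0 := by
  have hF : complexFourier h = 0 := by
    ext z
    rw [← taylorSeries_eq_of_entire' 0 z (differentiable_complexFourier hc hcs)]
    simp [iteratedDeriv_complexFourier_zero hc hcs, hm]
  have hFourier : 𝓕 h = 0 := by
    ext w
    simp [← complexFourier_two_pi_mul, hF]
  rw [← hc.fourierInv_fourier_eq (hc.integrable_of_hasCompactSupport hcs)
    (by rw [hFourier]; exact integrable_zero _ _ _), hFourier]
  ext v
  simp [fourierInv_eq]

end

section
variable {g G : ℝ → ℂ}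

theorem hasDerivAt_integral_Iic (hg : Continuous g) (hgi : Integrable g) (b : ℝ) :
    HasDerivAt (fun x ↦ ∫ t in Iic x, g t) (g b) b := by
  have hsplit :
      (fun x ↦ ∫ t in Iic x, g t) = fun x ↦ (∫ t in Iic 0, g t) + ∫ t in 0..x, g t := by
    ext x
    rw [← intervalIntegral.integral_Iic_sub_Iic hgi.integrableOn hgi.integrableOn, add_sub_cancel]
  rw [hsplit]
  exact (intervalIntegral.integral_hasDerivAt_right hgi.intervalIntegrable
    (hg.stronglyMeasurableAtFilter _ _) hg.continuousAt).const_add _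

theorem continuous_integral_Iic (hg : Continuous g) (hgi : Integrable g) :
    Continuous (fun x ↦ ∫ t in Iic x, g t) :=
  continuous_iff_continuousAt.2 fun x ↦ (hasDerivAt_integral_Iic hg hgi x).continuousAt

theorem HasCompactSupport.integral_Iic (hgc : HasCompactSupport g)
    (hint : ∫ t, g t = 0) : HasCompactSupport (fun x ↦ ∫ t in Iic x, g t) := by
  obtain ⟨a, ha⟩ := hgc.isCompact.bddBelow
  obtain ⟨b, hb⟩ := hgc.isCompact.bddAbove
  refine HasCompactSupport.intro isCompact_Icc (K := Icc a b) fun x hx ↦ ?_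
  rcases not_and_or.mp hx with hxa | hxb
  · refine setIntegral_eq_zero_of_forall_eq_zero fun t ht ↦ image_eq_zero_of_notMem_tsupport ?_
    exact fun hts ↦ hxa ((ha hts).trans ht)
  · rw [setIntegral_eq_integral_of_forall_compl_eq_zero, hint]
    exact fun t ht ↦ image_eq_zero_of_notMem_tsupport fun hts ↦
      ht ((hb hts).trans (le_of_not_ge hxb))

theorem integral_pow_succ_mul_eq (hg : Continuous g) (hgc : HasCompactSupport g)
    (hGc : HasCompactSupport G) (hGd : ∀ x, HasDerivAt G (g x) x) (k : ℕ) :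
    ∫ t : ℝ, (t : ℂ) ^ (k + 1) * g t = -((k + 1) * ∫ t : ℝ, (t : ℂ) ^ k * G t) := by
  have hG : Continuous G := continuous_iff_continuousAt.2 fun x ↦ (hGd x).continuousAt
  have hpow (t : ℝ) : HasDerivAt (fun t : ℝ ↦ (t : ℂ) ^ (k + 1)) ((k + 1) * (t : ℂ) ^ k) t := by
    simpa using (hasDerivAt_pow (k + 1) (t : ℂ)).comp_ofReal
  rw [integral_mul_deriv_eq_deriv_mul_of_integrable (fun t _ ↦ hpow t) (fun t _ ↦ hGd t),
    ← integral_const_mul]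
  · simp only [mul_assoc]
  · exact (Continuous.mul (by fun_prop) hg).integrable_of_hasCompactSupport hgc.mul_left
  all_goals exact (Continuous.mul (by fun_prop) hG).integrable_of_hasCompactSupport hGc.mul_left

theorem integral_pow_mul_integral_Iic_eq_zero_iff (hg : Continuous g)
    (hgc : HasCompactSupport g) (hint : ∫ t, g t = 0) (k : ℕ) :
    ∫ t : ℝ, (t : ℂ) ^ k * (∫ s in Iic t, g s) = 0 ↔ ∫ t : ℝ, (t : ℂ) ^ (k + 1) * g t = 0 := by
  rw [integral_pow_succ_mul_eq hg hgc (hgc.integral_Iic hint)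
    (hasDerivAt_integral_Iic hg (hg.integrable_of_hasCompactSupport hgc))]
  simp [Nat.cast_add_one_ne_zero]

end

/-- If `g ∈ C_c(ℝ)` is nonzero with `∫ g = 0`, then its Fourier transform (an entire
function) has a zero of finite positive order `n` at `0`, the primitive
`G₁(b) = ∫_{-∞}^b g` is compactly supported, and the Fourier transform of `G₁` has a
zero of order exactly `n - 1` at `0`. -/
theorem fourier_zero_order_drop (g : ℝ → ℂ) (hg : Continuous g)
    (hgc : HasCompactSupport g) (hg0 : g ≠ 0) (hint : (∫ t : ℝ, g t) = 0) :
    ∃ n : ℕ, 0 < n ∧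
      (∀ k < n, iteratedDeriv k
        (fun z : ℂ => ∫ t : ℝ, g t * Complex.exp (-(Complex.I * z * t))) 0 = 0) ∧
      iteratedDeriv n
        (fun z : ℂ => ∫ t : ℝ, g t * Complex.exp (-(Complex.I * z * t))) 0 ≠ 0 ∧
      HasCompactSupport (fun b : ℝ => ∫ t in Set.Iic b, g t) ∧
      (∀ k < n - 1, iteratedDeriv k
        (fun z : ℂ => ∫ t : ℝ, (∫ s in Set.Iic t, g s) *
          Complex.exp (-(Complex.I * z * t))) 0 = 0) ∧
      iteratedDeriv (n - 1)
        (fun z : ℂ => ∫ t : ℝ, (∫ s in Set.Iic t, g s) *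
          Complex.exp (-(Complex.I * z * t))) 0 ≠ 0 := by
  have hGc : HasCompactSupport (fun b ↦ ∫ t in Iic b, g t) := hgc.integral_Iic hint
  have hG : Continuous (fun b ↦ ∫ t in Iic b, g t) :=
    continuous_integral_Iic hg (hg.integrable_of_hasCompactSupport hgc)
  have hmoment : ∃ k : ℕ, ∫ t : ℝ, (t : ℂ) ^ k * g t ≠ 0 := by
    by_contra! h
    exact hg0 (eq_zero_of_forall_moment_eq_zero hg hgc h)
  classical
  obtain ⟨n, hn_moment, hmin⟩ : ∃ n : ℕ, ∫ t : ℝ, (t : ℂ) ^ n * g t ≠ 0 ∧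
      ∀ k < n, ∫ t : ℝ, (t : ℂ) ^ k * g t = 0 :=
    ⟨Nat.find hmoment, Nat.find_spec hmoment, fun k hk ↦ not_not.1 (Nat.find_min hmoment hk)⟩
  have hn : 0 < n := Nat.pos_of_ne_zero (by rintro rfl; simp [hint] at hn_moment)
  have hfourier := iteratedDeriv_complexFourier_zero_eq_zero_iff hg hgc
  have hfourierG := iteratedDeriv_complexFourier_zero_eq_zero_iff hG hGc
  refine ⟨n, hn, fun k hk ↦ (hfourier k).2 (hmin k hk), ?_, hGc, fun k hk ↦ ?_, ?_⟩
  · exact (hfourier n).not.2 hn_moment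
  · exact (hfourierG k).2
      ((integral_pow_mul_integral_Iic_eq_zero_iff hg hgc hint k).2 (hmin _ (by omega)))
  · refine (hfourierG (n - 1)).not.2 ?_
    rwa [integral_pow_mul_integral_Iic_eq_zero_iff hg hgc hint, Nat.sub_add_cancel hn]
end
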